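/- arXiv:2505.09709 — 4 statements merged into one kernel-verified Lean document; each statement's English description precedes it below -/
import Mathlib

section
/- Let σ ∈ ℕ^m with σ ≠ 0 and let s ≥ 1. If f ∈ V_{A,σ} satisfies π^{(s)}(f) = 0, then π^{(s-1)}(f) = 0; that is, ker(π^{(s)}|_{V_{A,σ}}) ⊆ ker(π^{(s-1)}|_{V_{A,σ}}). -/
open MvPolynomial

/-- The monomial `e^a = e_1^{a_1} ⋯ e_n^{a_n}` in `K[e_1,…,e_n]`. -/
noncomputable def eMon (K : Type*) [CommSemiring K] {n : ℕ} (a : Fin n → ℕ) :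
    MvPolynomial (Fin n) K :=
  ∏ i, X i ^ a i

/-- The monomial map `φ_A : K[e_1,…,e_n] → K[x_1,…,x_m]`, `e_i ↦ x^{ς_i}` where
`ς_i` is the `i`-th column of `A`. -/
noncomputable def phiA (K : Type*) [CommSemiring K] {m n : ℕ}
    (A : Matrix (Fin m) (Fin n) ℕ) :
    MvPolynomial (Fin n) K →ₐ[K] MvPolynomial (Fin m) K :=
  aeval fun i => ∏ j, X j ^ A j i

/-- The toric ideal `I_A = ker φ_A`. -/
noncomputable def toricIdeal (K : Type*) [CommRing K] {m n : ℕ}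
    (A : Matrix (Fin m) (Fin n) ℕ) : Ideal (MvPolynomial (Fin n) K) :=
  RingHom.ker (phiA K A).toRingHom

/-- The `K`-linear map `π^{(s)}` sending `e^α ↦ α ⊗ ⋯ ⊗ α` (s factors), where
`(K^n)^{⊗ s}` is identified with functions `(Fin s → Fin n) → K`. -/
noncomputable def piMap (K : Type*) [CommSemiring K] {n : ℕ} (s : ℕ)
    (f : MvPolynomial (Fin n) K) : (Fin s → Fin n) → K :=
  fun j => ∑ α ∈ f.support, f.coeff α * ∏ i : Fin s, (α (j i) : K)

/-- `V_{A,σ}`: the `K`-span of the monomials `e^α` with `Aα = σ`. -/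
noncomputable def fiberSpace (K : Type*) [CommRing K] {m n : ℕ}
    (A : Matrix (Fin m) (Fin n) ℕ) (σ : Fin m → ℕ) :
    Submodule K (MvPolynomial (Fin n) K) :=
  Submodule.span K { f | ∃ a : Fin n → ℕ, (∀ j, ∑ i, A j i * a i = σ j) ∧ f = eMon K a }

/-- The sum `f_σ` of those terms of `f` whose monomial lies in `V_{A,σ}`. -/
noncomputable def fiberComponent {K : Type*} [CommRing K] {m n : ℕ}
    (A : Matrix (Fin m) (Fin n) ℕ) (σ : Fin m → ℕ)
    (f : MvPolynomial (Fin n) K) : MvPolynomial (Fin n) K :=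
  ∑ α ∈ f.support.filter (fun α => ∀ j, ∑ i, A j i * α i = σ j),
    monomial α (f.coeff α)

/-- For a prime ideal `I`, the `t`-th symbolic power
`I^{(t)} = { f | f·g ∈ I^t for some g ∉ I }`. -/
def symbolicPower {R : Type*} [CommRing R] (I : Ideal R) (t : ℕ) : Set R :=
  { f | ∃ g, g ∉ I ∧ f * g ∈ I ^ t }

/-- The saturation `I : x^∞ = { f | x^k f ∈ I for some k }`. -/
def satPow {R : Type*} [CommRing R] (I : Ideal R) (x : R) : Ideal R where
  carrier := { f | ∃ k : ℕ, x ^ k * f ∈ I }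
  zero_mem' := ⟨0, by simp⟩
  add_mem' := by
    rintro a b ⟨k, hk⟩ ⟨l, hl⟩
    refine ⟨k + l, ?_⟩
    have h : x ^ (k + l) * (a + b) = x ^ l * (x ^ k * a) + x ^ k * (x ^ l * b) := by
      ring
    rw [h]
    exact Ideal.add_mem _ (Ideal.mul_mem_left _ _ hk) (Ideal.mul_mem_left _ _ hl)
  smul_mem' := by
    rintro c a ⟨k, hk⟩
    refine ⟨k, ?_⟩
    have h : x ^ k * (c • a) = c * (x ^ k * a) := by
      rw [smul_eq_mul]; ring
    rw [h]
    exact Ideal.mul_mem_left _ _ hk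

/-- The positive part `u^+` of an integer vector. -/
def pPart {n : ℕ} (u : Fin n → ℤ) : Fin n → ℕ := fun i => (u i).toNat

/-- The negative part `u^-` of an integer vector. -/
def nPart {n : ℕ} (u : Fin n → ℤ) : Fin n → ℕ := fun i => (-u i).toNat

/-- The binomial `f_u = e^{u^+} - e^{u^-}`. -/
noncomputable def binom (K : Type*) [CommRing K] {n : ℕ} (u : Fin n → ℤ) :
    MvPolynomial (Fin n) K := eMon K (pPart u) - eMon K (nPart u)

/-- The lattice `ker A ⊆ ℤ^n`. -/
def matKerZ {m n : ℕ} (A : Matrix (Fin m) (Fin n) ℕ) : Set (Fin n → ℤ) :=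
  { u | ∀ j, ∑ i, (A j i : ℤ) * u i = 0 }

/-- The product of all the variables `m = e_1 ⋯ e_n`. -/
noncomputable def mProd (K : Type*) [CommSemiring K] (n : ℕ) :
    MvPolynomial (Fin n) K := ∏ i, X i

/-!
Contract the last tensor factor of `π^{(s)}(f)` against a row `j` of `A` with `σ_j ≠ 0`.
Every monomial `e^α` of `f ∈ V_{A,σ}` satisfies `(Aα)_j = σ_j`, so the contraction is
`σ_j · π^{(s-1)}(f)`; it vanishes when `π^{(s)}(f)` does, and `σ_j` is nonzero in
characteristic zero.
-/

theorem eMon_eq_monomial (K : Type*) [CommSemiring K] {n : ℕ} (a : Fin n → ℕ) :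
    eMon K a = monomial (Finsupp.equivFunOnFinite.symm a) 1 := by
  rw [← prod_X_pow_eq_monomial, eMon]
  exact (Finsupp.prod_fintype (Finsupp.equivFunOnFinite.symm a)
    (fun i k => (X i : MvPolynomial (Fin n) K) ^ k) fun _ => pow_zero _).symm

theorem support_eMon_subset (K : Type*) [CommSemiring K] {n : ℕ} (a : Fin n → ℕ) :
    (eMon K a).support ⊆ {Finsupp.equivFunOnFinite.symm a} := by
  rw [eMon_eq_monomial]
  exact support_monomial_subset

theorem weight_eq_of_mem_support_of_mem_fiberSpace {K : Type*} [CommRing K]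
    {m n : ℕ} {A : Matrix (Fin m) (Fin n) ℕ} {σ : Fin m → ℕ} {f : MvPolynomial (Fin n) K}
    (hf : f ∈ fiberSpace K A σ) {α : Fin n →₀ ℕ} (hα : α ∈ f.support) (j : Fin m) :
    ∑ i, A j i * α i = σ j := by
  induction hf using Submodule.span_induction generalizing α with
  | mem g hg =>
    obtain ⟨a, ha, rfl⟩ := hg
    obtain rfl := Finset.mem_singleton.1 (support_eMon_subset K a hα)
    exact ha j
  | zero => simp at hα
  | add g₁ g₂ _ _ h₁ h₂ =>
    rcases Finset.mem_union.1 (support_add hα) with h | h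
    exacts [h₁ h, h₂ h]
  | smul c g _ hg => exact hg (support_smul hα)

section piMap

variable {K : Type*} [CommSemiring K] {n : ℕ}

theorem sum_mul_piMap_snoc (f : MvPolynomial (Fin n) K) {t : ℕ} (j : Fin t → Fin n)
    (w : Fin n → K) :
    ∑ k, w k * piMap K (t + 1) f (Fin.snoc j k) =
      ∑ α ∈ f.support, f.coeff α * (∏ i, (α (j i) : K)) * ∑ k, w k * α k := by
  simp only [piMap, Finset.mul_sum, Fin.prod_univ_castSucc, Fin.snoc_castSucc, Fin.snoc_last]
  rw [Finset.sum_comm]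
  refine Finset.sum_congr rfl fun α _ => Finset.sum_congr rfl fun k _ => ?_
  ring

theorem sum_mul_piMap_snoc_of_weight_eq (f : MvPolynomial (Fin n) K) {t : ℕ}
    (j : Fin t → Fin n) {w : Fin n → K} {c : K}
    (hw : ∀ α ∈ f.support, ∑ k, w k * α k = c) :
    ∑ k, w k * piMap K (t + 1) f (Fin.snoc j k) = c * piMap K t f j := by
  rw [sum_mul_piMap_snoc, piMap, Finset.mul_sum]
  refine Finset.sum_congr rfl fun α hα => ?_
  rw [hw α hα]
  ring

theorem piMap_eq_zero_of_piMap_succ_eq_zero [NoZeroDivisors K]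
    {f : MvPolynomial (Fin n) K} {w : Fin n → K} {c : K} (hc : c ≠ 0)
    (hw : ∀ α ∈ f.support, ∑ k, w k * α k = c) {t : ℕ} (h : piMap K (t + 1) f = 0) :
    piMap K t f = 0 := by
  funext j
  have hcontr := sum_mul_piMap_snoc_of_weight_eq f j hw
  simp only [h, Pi.zero_apply, mul_zero, Finset.sum_const_zero] at hcontr
  exact (mul_eq_zero.1 hcontr.symm).resolve_left hc

end piMap

theorem ker_piMap_subset_general
    {K : Type*} [Field K] [CharZero K]
    {m n : ℕ} (A : Matrix (Fin m) (Fin n) ℕ)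
    (σ : Fin m → ℕ) (hσ : σ ≠ 0) (s : ℕ) (hs : 1 ≤ s)
    (f : MvPolynomial (Fin n) K) (hf : f ∈ fiberSpace K A σ)
    (h : piMap K s f = 0) :
    piMap K (s - 1) f = 0 := by
  obtain ⟨t, rfl⟩ : ∃ t, s = t + 1 := ⟨s - 1, by omega⟩
  obtain ⟨j₀, hj₀⟩ : ∃ j, σ j ≠ 0 := Function.ne_iff.1 hσ
  refine piMap_eq_zero_of_piMap_succ_eq_zero (w := fun k => (A j₀ k : K))
    (Nat.cast_ne_zero.2 hj₀) (fun α hα => ?_) h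
  exact_mod_cast weight_eq_of_mem_support_of_mem_fiberSpace hf hα j₀

/-- For `σ ≠ 0` and `s ≥ 1`,
`ker(π^{(s)}|_{V_{A,σ}}) ⊆ ker(π^{(s-1)}|_{V_{A,σ}})`. -/
theorem ker_piMap_subset
    {K : Type*} [Field K] [IsAlgClosed K] [CharZero K]
    {m n : ℕ} (A : Matrix (Fin m) (Fin n) ℕ)
    (hA : ∀ i, ∃ j, A j i ≠ 0)
    (σ : Fin m → ℕ) (hσ : σ ≠ 0) (s : ℕ) (hs : 1 ≤ s)
    (f : MvPolynomial (Fin n) K) (hf : f ∈ fiberSpace K A σ)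
    (h : piMap K s f = 0) :
    piMap K (s - 1) f = 0 :=
  ker_piMap_subset_general A σ hσ s hs f hf h
end

section
/- Let f ∈ K[e_1,…,e_n] and let t ≥ 1. If π^{(d)}(f) = 0 for every d with 1 ≤ d ≤ t, then for every variable e_j the partial derivative ∂f/∂e_j satisfies π^{(t-1)}(∂f/∂e_j) = 0. -/
open MvPolynomial

/-! Write `⟨f, q⟩ = ∑_α f_α q(α)` for the pairing of `f` with a polynomial `q` evaluated at the
exponent vectors of `f`. Then `π^{(s)}(f)(J) = ⟨f, e_{J_1} ⋯ e_{J_s}⟩`, so the hypothesis says that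
`⟨f, q⟩ = 0` for every `q` of degree at most `t` without constant term. Differentiating in `e_j`
multiplies each term by its `j`-th exponent and then lowers that exponent by one, so
`⟨∂f/∂e_j, q⟩ = ⟨f, e_j · q(e - δ_j)⟩`, and for `q = e_{J_1} ⋯ e_{J_{t-1}}` the polynomial on the
right has degree at most `t` and no constant term. -/

section ExponentPairing

variable {R σ : Type*} [CommRing R]

noncomputable def exponentPairing (f : MvPolynomial σ R) : MvPolynomial σ R →ₗ[R] R :=
  ∑ α ∈ f.support, f.coeff α • (aeval fun i => (α i : R)).toLinearMap

theorem exponentPairing_eq_sum_of_support_subset {f : MvPolynomial σ R} {s : Finset (σ →₀ ℕ)}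
    (hs : f.support ⊆ s) (q : MvPolynomial σ R) :
    exponentPairing f q = ∑ α ∈ s, f.coeff α * aeval (fun i => (α i : R)) q := by
  simp only [exponentPairing, LinearMap.sum_apply, LinearMap.smul_apply,
    AlgHom.toLinearMap_apply, smul_eq_mul]
  exact Finset.sum_subset hs fun α _ hα => by rw [notMem_support_iff.mp hα, zero_mul]

theorem exponentPairing_add_left (f g q : MvPolynomial σ R) :
    exponentPairing (f + g) q = exponentPairing f q + exponentPairing g q := by
  classical
  rw [exponentPairing_eq_sum_of_support_subset support_add,
    exponentPairing_eq_sum_of_support_subset Finset.subset_union_left,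
    exponentPairing_eq_sum_of_support_subset Finset.subset_union_right,
    ← Finset.sum_add_distrib]
  simp only [coeff_add, add_mul]

theorem exponentPairing_monomial (α : σ →₀ ℕ) (c : R) (q : MvPolynomial σ R) :
    exponentPairing (monomial α c) q = c * aeval (fun i => (α i : R)) q := by
  classical
  rw [exponentPairing_eq_sum_of_support_subset support_monomial_subset, Finset.sum_singleton,
    coeff_monomial, if_pos rfl]

theorem exponentPairing_pderiv [DecidableEq σ] (i : σ) (f q : MvPolynomial σ R) :
    exponentPairing (pderiv i f) q =
      exponentPairing f (X i * bind₁ (fun k => X k - C (Pi.single i 1 k)) q) := by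
  induction f using MvPolynomial.induction_on' with
  | monomial α c =>
    rw [pderiv_monomial, exponentPairing_monomial, exponentPairing_monomial, map_mul, aeval_X,
      aeval_bind₁]
    rcases Nat.eq_zero_or_pos (α i) with hαi | hαi
    · simp [hαi]
    have hshift : ∀ k, (((α - Finsupp.single i 1 : σ →₀ ℕ) k : ℕ) : R) =
        aeval (fun k => (α k : R)) (X k - C (Pi.single i 1 k) : MvPolynomial σ R) := by
      intro k
      rcases eq_or_ne k i with rfl | hk
      · simp [Nat.cast_sub hαi]
      · simp [hk]
    simp only [hshift, mul_assoc]
  | add f g hf hg =>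
    rw [map_add, exponentPairing_add_left, exponentPairing_add_left, hf, hg]

theorem exists_prod_X_eq_monomial (m : σ →₀ ℕ) :
    ∃ J : Fin (Multiset.card (Finsupp.toMultiset m)) → σ,
      ∏ i, X (J i) = monomial m (1 : R) := by
  set l := (Finsupp.toMultiset m).toList
  have hl : l.length = Multiset.card (Finsupp.toMultiset m) := Multiset.length_toList _
  refine ⟨fun i => l.get (Fin.cast hl.symm i), ?_⟩
  rw [← Fintype.prod_equiv (finCongr hl) (fun i => X (l.get i)) _ (fun _ => rfl),
    ← List.prod_ofFn, List.ofFn_comp', List.ofFn_get, Multiset.prod_map_toList,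
    Finsupp.toMultiset_map, Finsupp.prod_toMultiset,
    Finsupp.prod_mapDomain_index (fun _ => pow_zero _) (fun _ _ _ => pow_add _ _ _), monomial_eq,
    C_1, one_mul]

theorem exponentPairing_eq_zero_of_totalDegree_le {f q : MvPolynomial σ R} {t : ℕ}
    (hf : ∀ d, 1 ≤ d → d ≤ t → ∀ J : Fin d → σ, exponentPairing f (∏ i, X (J i)) = 0)
    (hq : q.totalDegree ≤ t) (hq₀ : constantCoeff q = 0) : exponentPairing f q = 0 := by
  rw [q.as_sum, map_sum]
  refine Finset.sum_eq_zero fun m hm => ?_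
  obtain ⟨J, hJ⟩ := exists_prod_X_eq_monomial (R := R) m
  have hm₀ : m ≠ 0 := by
    rintro rfl
    exact mem_support_iff.mp hm (by rwa [← constantCoeff_eq])
  have hpos : 0 < Multiset.card (Finsupp.toMultiset m) := by
    obtain ⟨a, ha⟩ := Finsupp.support_nonempty_iff.mpr hm₀
    exact Multiset.card_pos_iff_exists_mem.mpr ⟨a, (Finsupp.mem_toMultiset _ _).mpr ha⟩
  have hdeg : Multiset.card (Finsupp.toMultiset m) ≤ t := by
    rw [totalDegree_eq] at hq
    exact (Finset.le_sup (f := fun m => Multiset.card (Finsupp.toMultiset m)) hm).trans hq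
  rw [← mul_one (coeff m q), ← smul_eq_mul, ← smul_monomial, map_smul, ← hJ, hf _ hpos hdeg J,
    smul_zero]

theorem totalDegree_prod_X_sub_C_le [Nontrivial R] {s : ℕ} (J : Fin s → σ) (c : Fin s → R) :
    (∏ i, (X (J i) - C (c i))).totalDegree ≤ s := by
  calc _ ≤ ∑ i, (X (J i) - C (c i)).totalDegree := totalDegree_finsetProd _ _
    _ ≤ ∑ _i : Fin s, 1 := by
      gcongr with i
      exact (totalDegree_sub_C_le _ _).trans (totalDegree_X _).le
    _ = s := by simp

theorem piMap_apply_eq_exponentPairing {n : ℕ} (s : ℕ) (f : MvPolynomial (Fin n) R)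
    (J : Fin s → Fin n) : piMap R s f J = exponentPairing f (∏ i, X (J i)) := by
  simp [piMap, exponentPairing_eq_sum_of_support_subset subset_rfl]

end ExponentPairing

theorem piMap_pderiv_eq_zero_general
    {K : Type*} [Field K]
    {n : ℕ} (f : MvPolynomial (Fin n) K) (t : ℕ) (ht : 1 ≤ t)
    (h : ∀ d, 1 ≤ d → d ≤ t → piMap K d f = 0) (j : Fin n) :
    piMap K (t - 1) (MvPolynomial.pderiv j f) = 0 := by
  have hf : ∀ d, 1 ≤ d → d ≤ t → ∀ J : Fin d → Fin n, exponentPairing f (∏ i, X (J i)) = 0 :=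
    fun d hd hdt J => by rw [← piMap_apply_eq_exponentPairing, h d hd hdt, Pi.zero_apply]
  funext J
  rw [piMap_apply_eq_exponentPairing, exponentPairing_pderiv, Pi.zero_apply]
  refine exponentPairing_eq_zero_of_totalDegree_le hf ?_ (by simp)
  calc _ ≤ 1 + (t - 1) := by
        rw [map_prod]
        simp only [bind₁_X_right]
        exact (totalDegree_mul _ _).trans
          (add_le_add (totalDegree_X _).le (totalDegree_prod_X_sub_C_le _ _))
    _ = t := by omega

/-- If `π^{(d)}(f) = 0` for all `1 ≤ d ≤ t`, then
`π^{(t-1)}(∂f/∂e_j) = 0` for every variable `e_j`. -/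
theorem piMap_pderiv_eq_zero
    {K : Type*} [Field K] [IsAlgClosed K] [CharZero K]
    {n : ℕ} (f : MvPolynomial (Fin n) K) (t : ℕ) (ht : 1 ≤ t)
    (h : ∀ d, 1 ≤ d → d ≤ t → piMap K d f = 0) (j : Fin n) :
    piMap K (t - 1) (MvPolynomial.pderiv j f) = 0 :=
  piMap_pderiv_eq_zero_general f t ht h j
end

section
/- Let v_1,…,v_r ∈ ker(A) and λ_1,…,λ_r ∈ ℤ, and suppose u = λ_1 v_1 + ⋯ + λ_r v_r. Then there exist α, β_1,…,β_r ∈ ℕ^n such that e^α · f_u = e^{β_1} f_{λ_1 v_1} + ⋯ + e^{β_r} f_{λ_r v_r}; in particular a monomial multiple of f_u lies in the ideal generated by f_{v_1},…,f_{v_r}. -/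
/-!
Writing `e^a - e^b = e^{a ⊓ b} f_{a - b}` for `a, b ∈ ℕ^n` and expanding
`e^{u⁺ + w⁺} - e^{u⁻ + w⁻} = e^{w⁺} f_u + e^{u⁻} f_w` gives
`e^δ f_{u + w} = e^{w⁺} f_u + e^{u⁻} f_w` for some monomial `e^δ`; induction on the number of
summands handles `u = ∑ λᵢ vᵢ`. Finally `f_v ∣ f_{λ v}`, since `f_{k v} = (e^{v⁺})^k - (e^{v⁻})^k`
for `k ∈ ℕ` and `f_{-w} = -f_w`.
-/

open MvPolynomial

lemma Int.toNat_natCast_mul (k : ℕ) (a : ℤ) : (k * a).toNat = k * a.toNat := by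
  have h : ((k * a).toNat : ℤ) = k * a.toNat := by
    rw [Int.toNat_eq_max, Int.toNat_eq_max, mul_max_of_nonneg _ _ k.cast_nonneg, mul_zero]
  exact_mod_cast h

section Binomials

variable {K : Type*} [CommRing K] {n : ℕ}

lemma eMon_add (a b : Fin n → ℕ) : eMon K (a + b) = eMon K a * eMon K b := by
  simp only [eMon, Pi.add_apply, pow_add, Finset.prod_mul_distrib]

lemma eMon_nsmul (k : ℕ) (a : Fin n → ℕ) : eMon K (k • a) = eMon K a ^ k := by
  simp only [eMon, Pi.smul_apply, smul_eq_mul, ← Finset.prod_pow, ← pow_mul, mul_comm]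

lemma eMon_sub_eMon (a b : Fin n → ℕ) :
    eMon K a - eMon K b = eMon K (a ⊓ b) * binom K (fun i => (a i : ℤ) - b i) := by
  have ha : a ⊓ b + pPart (fun i => (a i : ℤ) - b i) = a := by
    funext i; simp only [Pi.add_apply, Pi.inf_apply, pPart]; omega
  have hb : a ⊓ b + nPart (fun i => (a i : ℤ) - b i) = b := by
    funext i; simp only [Pi.add_apply, Pi.inf_apply, nPart]; omega
  rw [binom, mul_sub, ← eMon_add, ← eMon_add, ha, hb]

lemma binom_zero : binom K (0 : Fin n → ℤ) = 0 := by
  have h : nPart (0 : Fin n → ℤ) = pPart 0 := by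
    funext i; simp only [nPart, pPart, Pi.zero_apply, neg_zero]
  rw [binom, h, sub_self]

lemma binom_neg (w : Fin n → ℤ) : binom K (-w) = -binom K w := by
  have hp : pPart (-w) = nPart w := rfl
  have hn : nPart (-w) = pPart w := by funext i; simp only [nPart, pPart, Pi.neg_apply, neg_neg]
  rw [binom, binom, hp, hn, neg_sub]

lemma binom_natCast_smul (k : ℕ) (v : Fin n → ℤ) :
    binom K ((k : ℤ) • v) = eMon K (pPart v) ^ k - eMon K (nPart v) ^ k := by
  have hp : pPart ((k : ℤ) • v) = k • pPart v := by
    funext i; simp [pPart, Int.toNat_natCast_mul]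
  have hn : nPart ((k : ℤ) • v) = k • nPart v := by
    funext i; simp [nPart, ← mul_neg, Int.toNat_natCast_mul]
  rw [binom, hp, hn, eMon_nsmul, eMon_nsmul]

lemma binom_dvd_binom_zsmul (l : ℤ) (v : Fin n → ℤ) : binom K v ∣ binom K (l • v) := by
  obtain ⟨k, rfl | rfl⟩ := Int.eq_nat_or_neg l
  · rw [binom_natCast_smul]
    exact sub_dvd_pow_sub_pow _ _ k
  · rw [neg_smul, binom_neg, dvd_neg, binom_natCast_smul]
    exact sub_dvd_pow_sub_pow _ _ k

lemma eMon_mul_binom_add (u w : Fin n → ℤ) :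
    eMon K ((pPart u + pPart w) ⊓ (nPart u + nPart w)) * binom K (u + w)
      = eMon K (pPart w) * binom K u + eMon K (nPart u) * binom K w := by
  have huw : u + w = fun i => ((pPart u + pPart w) i : ℤ) - (nPart u + nPart w) i := by
    funext i; simp only [Pi.add_apply, pPart, nPart]; omega
  rw [huw, ← eMon_sub_eMon, eMon_add, eMon_add, binom, binom]
  ring

theorem exists_eMon_mul_binom_sum :
    ∀ {r : ℕ} (w : Fin r → Fin n → ℤ), ∃ (α : Fin n → ℕ) (β : Fin r → Fin n → ℕ),
      eMon K α * binom K (∑ i, w i) = ∑ i, eMon K (β i) * binom K (w i)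
  | 0, _ => ⟨0, 0, by simp [binom_zero]⟩
  | _ + 1, w => by
    obtain ⟨α, β, hαβ⟩ := exists_eMon_mul_binom_sum fun i => w (Fin.succ i)
    set W := ∑ i, w (Fin.succ i) with hW
    refine ⟨α + (pPart (w 0) + pPart W) ⊓ (nPart (w 0) + nPart W),
      Fin.cons (α + pPart W) (fun i => nPart (w 0) + β i), ?_⟩
    rw [Fin.sum_univ_succ, Fin.sum_univ_succ, ← hW, eMon_add, mul_assoc, eMon_mul_binom_add,
      mul_add]
    simp only [Fin.cons_zero, Fin.cons_succ, eMon_add, mul_assoc, ← Finset.mul_sum, ← hαβ]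
    ring

end Binomials

theorem monomial_multiple_binom_general
    {K : Type*} [Field K]
    {n : ℕ}
    {r : ℕ} (v : Fin r → Fin n → ℤ)
    (l : Fin r → ℤ) (u : Fin n → ℤ) (hu : u = ∑ i, l i • v i) :
    (∃ (α : Fin n → ℕ) (β : Fin r → Fin n → ℕ),
        eMon K α * binom K u = ∑ i, eMon K (β i) * binom K (l i • v i))
    ∧ ∃ γ : Fin n → ℕ,
        eMon K γ * binom K u
          ∈ Ideal.span { g : MvPolynomial (Fin n) K | ∃ i, g = binom K (v i) } := by
  obtain ⟨α, β, hαβ⟩ := exists_eMon_mul_binom_sum (K := K) fun i => l i • v i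
  rw [← hu] at hαβ
  refine ⟨⟨α, β, hαβ⟩, α, hαβ ▸ Ideal.sum_mem _ fun i _ => ?_⟩
  exact Ideal.mul_mem_left _ _
    (Ideal.mem_of_dvd _ (binom_dvd_binom_zsmul _ _) (Ideal.subset_span ⟨i, rfl⟩))

/-- If `u = λ_1 v_1 + ⋯ + λ_r v_r` with `v_i ∈ ker(A)`, then some monomial
multiple of `f_u` is a monomial combination of the `f_{λ_i v_i}`; in particular a monomial
multiple of `f_u` lies in the ideal generated by `f_{v_1},…,f_{v_r}`. -/
theorem monomial_multiple_binom
    {K : Type*} [Field K] [IsAlgClosed K] [CharZero K]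
    {m n : ℕ} (A : Matrix (Fin m) (Fin n) ℕ)
    (hA : ∀ i, ∃ j, A j i ≠ 0)
    {r : ℕ} (v : Fin r → Fin n → ℤ) (hv : ∀ i, v i ∈ matKerZ A)
    (l : Fin r → ℤ) (u : Fin n → ℤ) (hu : u = ∑ i, l i • v i) :
    (∃ (α : Fin n → ℕ) (β : Fin r → Fin n → ℕ),
        eMon K α * binom K u = ∑ i, eMon K (β i) * binom K (l i • v i))
    ∧ ∃ γ : Fin n → ℕ,
        eMon K γ * binom K u
          ∈ Ideal.span { g : MvPolynomial (Fin n) K | ∃ i, g = binom K (v i) } :=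
  monomial_multiple_binom_general v l u hu
end

section
/- For every t ≥ 1, the t-th symbolic power of a toric ideal equals the saturation of its t-th ordinary power with the product of the variables: I_A^t : m^∞ = I_A^{(t)}. -/
open MvPolynomial

namespace ToricAux

open Finsupp

variable {K : Type*} [Field K] {m n : ℕ}

/-- degree map: `A·α` as a finsupp. -/
noncomputable def DA (A : Matrix (Fin m) (Fin n) ℕ) (α : Fin n →₀ ℕ) : Fin m →₀ ℕ :=
  Finsupp.equivFunOnFinite.symm fun j => ∑ i, A j i * α i

lemma DA_apply (A : Matrix (Fin m) (Fin n) ℕ) (α : Fin n →₀ ℕ) (j : Fin m) :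
    DA A α j = ∑ i, A j i * α i := rfl

lemma DA_add (A : Matrix (Fin m) (Fin n) ℕ) (α β : Fin n →₀ ℕ) :
    DA A (α + β) = DA A α + DA A β := by
  ext j
  simp [DA_apply, Finsupp.add_apply, mul_add, Finset.sum_add_distrib]

lemma prod_X_pow_univ {k : ℕ} (s : Fin k →₀ ℕ) :
    (∏ j, X j ^ s j : MvPolynomial (Fin k) K) = monomial s 1 := by
  rw [← prod_X_pow_eq_monomial]
  refine (Finset.prod_subset (Finset.subset_univ _) ?_).symm
  intro x _ hx
  simp [Finsupp.notMem_support_iff.mp hx]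

lemma phiA_monomial (A : Matrix (Fin m) (Fin n) ℕ) (α : Fin n →₀ ℕ) (c : K) :
    phiA K A (monomial α c) = monomial (DA A α) c := by
  rw [phiA, aeval_monomial]
  have h1 : (α.prod fun i k => (∏ j, X j ^ A j i : MvPolynomial (Fin m) K) ^ k)
      = ∏ i, (∏ j, (X j : MvPolynomial (Fin m) K) ^ A j i) ^ α i :=
    Finsupp.prod_fintype _ _ (fun i => pow_zero _)
  rw [h1]
  have h2 : (∏ i, (∏ j, (X j : MvPolynomial (Fin m) K) ^ A j i) ^ α i)
      = ∏ j, (X j : MvPolynomial (Fin m) K) ^ (DA A α j) := by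
    simp_rw [← Finset.prod_pow, ← pow_mul]
    rw [Finset.prod_comm]
    simp_rw [Finset.prod_pow_eq_pow_sum, DA_apply]
  rw [h2, prod_X_pow_univ]
  simp [algebraMap_eq, C_mul_monomial]

/-- fiber coefficient sum -/
noncomputable def csum (A : Matrix (Fin m) (Fin n) ℕ) (τ : Fin m →₀ ℕ)
    (f : MvPolynomial (Fin n) K) : K :=
  ∑ α ∈ f.support, if DA A α = τ then f.coeff α else 0

lemma coeff_phiA (A : Matrix (Fin m) (Fin n) ℕ) (f : MvPolynomial (Fin n) K)
    (τ : Fin m →₀ ℕ) : coeff τ (phiA K A f) = csum A τ f := by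
  conv_lhs => rw [f.as_sum, map_sum]
  rw [coeff_sum]
  simp [phiA_monomial, coeff_monomial, csum]

lemma mem_toricIdeal_iff (A : Matrix (Fin m) (Fin n) ℕ) (f : MvPolynomial (Fin n) K) :
    f ∈ toricIdeal K A ↔ ∀ τ, csum A τ f = 0 := by
  rw [toricIdeal, RingHom.mem_ker]
  constructor
  · intro h τ
    rw [← coeff_phiA, show phiA K A f = 0 from h, coeff_zero]
  · intro h
    show phiA K A f = 0
    ext τ
    rw [coeff_phiA, h, coeff_zero]

/-- homogeneous component extraction -/
noncomputable def TA (A : Matrix (Fin m) (Fin n) ℕ) (σ : Fin m →₀ ℕ)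
    (f : MvPolynomial (Fin n) K) : MvPolynomial (Fin n) K :=
  ∑ α ∈ f.support.filter (fun α => DA A α = σ), monomial α (f.coeff α)

lemma coeff_TA (A : Matrix (Fin m) (Fin n) ℕ) (σ : Fin m →₀ ℕ)
    (f : MvPolynomial (Fin n) K) (γ : Fin n →₀ ℕ) :
    coeff γ (TA A σ f) = if DA A γ = σ then coeff γ f else 0 := by
  classical
  rw [TA, coeff_sum]
  simp_rw [coeff_monomial]
  rw [Finset.sum_ite_eq' (f.support.filter (fun α => DA A α = σ)) γ (fun α => f.coeff α)]
  by_cases h1 : DA A γ = σ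
  · by_cases h2 : γ ∈ f.support
    · simp [h1, h2]
    · simp [h1, h2, MvPolynomial.notMem_support_iff.mp h2]
  · simp [h1]

lemma TA_add (A : Matrix (Fin m) (Fin n) ℕ) (σ : Fin m →₀ ℕ)
    (f g : MvPolynomial (Fin n) K) : TA A σ (f + g) = TA A σ f + TA A σ g := by
  ext γ
  simp only [coeff_TA, coeff_add]
  split_ifs <;> simp

lemma TA_sub (A : Matrix (Fin m) (Fin n) ℕ) (σ : Fin m →₀ ℕ)
    (f g : MvPolynomial (Fin n) K) : TA A σ (f - g) = TA A σ f - TA A σ g := by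
  ext γ
  simp only [coeff_TA, coeff_sub]
  split_ifs <;> simp

lemma mem_support_TA {A : Matrix (Fin m) (Fin n) ℕ} {σ : Fin m →₀ ℕ}
    {f : MvPolynomial (Fin n) K} {γ : Fin n →₀ ℕ} (h : γ ∈ (TA A σ f).support) :
    γ ∈ f.support ∧ DA A γ = σ := by
  rw [MvPolynomial.mem_support_iff, coeff_TA] at h
  by_cases h1 : DA A γ = σ
  · rw [if_pos h1] at h
    exact ⟨MvPolynomial.mem_support_iff.mpr h, h1⟩
  · rw [if_neg h1] at h
    exact absurd rfl h

/-- `f` is `A`-homogeneous of degree `σ`. -/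
def IsHomA (A : Matrix (Fin m) (Fin n) ℕ) (σ : Fin m →₀ ℕ)
    (f : MvPolynomial (Fin n) K) : Prop :=
  ∀ α ∈ f.support, DA A α = σ

lemma isHom_TA (A : Matrix (Fin m) (Fin n) ℕ) (σ : Fin m →₀ ℕ)
    (f : MvPolynomial (Fin n) K) : IsHomA A σ (TA A σ f) :=
  fun _ h => (mem_support_TA h).2

lemma TA_of_isHom {A : Matrix (Fin m) (Fin n) ℕ} {σ : Fin m →₀ ℕ}
    {f : MvPolynomial (Fin n) K} (h : IsHomA A σ f) : TA A σ f = f := by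
  ext γ
  rw [coeff_TA]
  by_cases h1 : DA A γ = σ
  · rw [if_pos h1]
  · rw [if_neg h1]
    by_contra hc
    exact h1 (h γ (MvPolynomial.mem_support_iff.mpr fun h' => hc h'.symm))

lemma TA_eq_zero {A : Matrix (Fin m) (Fin n) ℕ} {σ : Fin m →₀ ℕ}
    {f : MvPolynomial (Fin n) K} (h : ∀ α ∈ f.support, DA A α ≠ σ) :
    TA A σ f = 0 := by
  ext γ
  rw [coeff_TA, coeff_zero]
  by_cases h1 : DA A γ = σ
  · rw [if_pos h1]
    by_contra hc
    exact h γ (MvPolynomial.mem_support_iff.mpr hc) h1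
  · rw [if_neg h1]

lemma isHom_mul {A : Matrix (Fin m) (Fin n) ℕ} {σ τ : Fin m →₀ ℕ}
    {f g : MvPolynomial (Fin n) K} (hf : IsHomA A σ f) (hg : IsHomA A τ g) :
    IsHomA A (σ + τ) (f * g) := by
  classical
  intro α hα
  obtain ⟨a, ha, b, hb, rfl⟩ := Finset.mem_add.mp (MvPolynomial.support_mul f g hα)
  rw [DA_add, hf a ha, hg b hb]

lemma phiA_of_isHom {A : Matrix (Fin m) (Fin n) ℕ} {σ : Fin m →₀ ℕ}
    {f : MvPolynomial (Fin n) K} (h : IsHomA A σ f) :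
    phiA K A f = monomial σ (csum A σ f) := by
  conv_lhs => rw [f.as_sum, map_sum]
  have h1 : ∀ α ∈ f.support, phiA K A (monomial α (f.coeff α)) = monomial σ (f.coeff α) := by
    intro α hα
    rw [phiA_monomial, h α hα]
  rw [Finset.sum_congr rfl h1, ← map_sum (monomial σ)]
  congr 1
  rw [csum]
  exact (Finset.sum_congr rfl fun α hα => (if_pos (h α hα))).symm

/-- the set of degrees of `f` -/
noncomputable def Degs (A : Matrix (Fin m) (Fin n) ℕ) (f : MvPolynomial (Fin n) K) :
    Finset (Fin m →₀ ℕ) :=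
  f.support.image (DA A)

lemma sum_TA (A : Matrix (Fin m) (Fin n) ℕ) (f : MvPolynomial (Fin n) K) :
    f = ∑ σ ∈ Degs A f, TA A σ f := by
  classical
  ext γ
  rw [coeff_sum]
  simp_rw [coeff_TA]
  rw [Finset.sum_ite_eq (Degs A f) (DA A γ) (fun _ => coeff γ f)]
  by_cases h : γ ∈ f.support
  · rw [if_pos (show DA A γ ∈ Degs A f from Finset.mem_image_of_mem _ h)]
  · rw [MvPolynomial.notMem_support_iff.mp h]
    split_ifs <;> rfl

lemma csum_TA (A : Matrix (Fin m) (Fin n) ℕ) (τ : Fin m →₀ ℕ)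
    (f : MvPolynomial (Fin n) K) : csum A τ (TA A τ f) = csum A τ f := by
  rw [csum, csum]
  rw [Finset.sum_subset (fun γ hγ => (mem_support_TA hγ).1)
    (fun γ _ hγ => ?_)]
  · refine Finset.sum_congr rfl fun γ _ => ?_
    rw [coeff_TA]
    split_ifs <;> rfl
  · split_ifs with h
    · exact MvPolynomial.notMem_support_iff.mp hγ
    · rfl

lemma toricIdeal_TA_mem {A : Matrix (Fin m) (Fin n) ℕ} {f : MvPolynomial (Fin n) K}
    (h : f ∈ toricIdeal K A) (τ : Fin m →₀ ℕ) : TA A τ f ∈ toricIdeal K A := by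
  rw [mem_toricIdeal_iff] at h ⊢
  intro τ'
  by_cases hττ : τ' = τ
  · rw [hττ, csum_TA]
    exact h τ
  · rw [csum]
    refine Finset.sum_eq_zero fun γ hγ => ?_
    rw [if_neg]
    rw [(mem_support_TA hγ).2]
    exact fun hc => hττ hc.symm

lemma TA_zero (A : Matrix (Fin m) (Fin n) ℕ) (σ : Fin m →₀ ℕ) :
    TA A σ (0 : MvPolynomial (Fin n) K) = 0 := by
  ext γ
  rw [coeff_TA]
  split_ifs <;> simp

lemma TA_sum {A : Matrix (Fin m) (Fin n) ℕ} {σ : Fin m →₀ ℕ} {ι : Type*}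
    (s : Finset ι) (g : ι → MvPolynomial (Fin n) K) :
    TA A σ (∑ i ∈ s, g i) = ∑ i ∈ s, TA A σ (g i) := by
  classical
  induction s using Finset.induction with
  | empty => simp [TA_zero]
  | insert _ _ h ih => rw [Finset.sum_insert h, TA_add, ih, Finset.sum_insert h]

lemma pow_TA_mem {A : Matrix (Fin m) (Fin n) ℕ} {t : ℕ} {f : MvPolynomial (Fin n) K}
    (h : f ∈ toricIdeal K A ^ t) (σ : Fin m →₀ ℕ) : TA A σ f ∈ toricIdeal K A ^ t := by
  classical
  induction t generalizing f σ with
  | zero => simp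
  | succ t ih =>
    rw [pow_succ] at h ⊢
    refine Submodule.mul_induction_on h (fun x hx y hy => ?_) (fun a b ha hb => ?_)
    · have hxy : x * y = ∑ ρ ∈ Degs A x, ∑ τ ∈ Degs A y, TA A ρ x * TA A τ y := by
        conv_lhs => rw [sum_TA A x, sum_TA A y]
        rw [Finset.sum_mul_sum]
      rw [hxy, TA_sum]
      refine Ideal.sum_mem _ fun ρ _ => ?_
      rw [TA_sum]
      refine Ideal.sum_mem _ fun τ _ => ?_
      by_cases hp : ρ + τ = σ
      · rw [show TA A σ (TA A ρ x * TA A τ y) = TA A ρ x * TA A τ y from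
          hp ▸ TA_of_isHom (isHom_mul (isHom_TA A ρ x) (isHom_TA A τ y))]
        exact Ideal.mul_mem_mul (ih hx ρ) (toricIdeal_TA_mem hy τ)
      · rw [TA_eq_zero fun α hα => ?_]
        · exact Ideal.zero_mem _
        · rw [isHom_mul (isHom_TA A ρ x) (isHom_TA A τ y) α hα]
          exact hp
    · rw [TA_add]
      exact Ideal.add_mem _ ha hb

lemma mem_toricIdeal_iff_phi (A : Matrix (Fin m) (Fin n) ℕ) (f : MvPolynomial (Fin n) K) :
    f ∈ toricIdeal K A ↔ phiA K A f = 0 := by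
  rw [toricIdeal, RingHom.mem_ker]
  exact Iff.rfl

lemma monomial_mul_TA (A : Matrix (Fin m) (Fin n) ℕ) (σ : Fin m →₀ ℕ)
    (β : Fin n →₀ ℕ) (f : MvPolynomial (Fin n) K) :
    monomial β (1 : K) * TA A σ f = TA A (DA A β + σ) (monomial β 1 * f) := by
  ext γ
  by_cases hb : β ≤ γ
  · have hc : β + (γ - β) = γ := add_tsub_cancel_of_le hb
    have hDA : DA A γ = DA A β + DA A (γ - β) := by
      conv_lhs => rw [← hc, DA_add]
    rw [coeff_monomial_mul', if_pos hb, coeff_TA, coeff_TA, coeff_monomial_mul', if_pos hb]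
    by_cases h1 : DA A (γ - β) = σ
    · rw [if_pos h1, if_pos (by rw [hDA, h1])]
    · rw [if_neg h1, if_neg (fun hc2 => h1 (add_left_cancel (hDA ▸ hc2 : DA A β + DA A (γ - β) = DA A β + σ))), mul_zero]
  · rw [coeff_monomial_mul', if_neg hb, coeff_TA, coeff_monomial_mul', if_neg hb]
    split_ifs <;> rfl

/-- the constant exponent vector -/
noncomputable def constF (n c : ℕ) : Fin n →₀ ℕ := Finsupp.equivFunOnFinite.symm fun _ => c

lemma mProd_pow_eq (k : ℕ) : (mProd K n) ^ k = monomial (constF n k) (1 : K) := by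
  have h1 : (mProd K n) = monomial (constF n 1) 1 := by
    rw [mProd, ← prod_X_pow_univ (K := K) (constF n 1)]
    refine Finset.prod_congr rfl fun i _ => ?_
    norm_num [constF]
  rw [h1, monomial_pow, one_pow]
  have h2 : k • constF n 1 = constF n k := by
    ext i
    rw [Finsupp.smul_apply, smul_eq_mul]
    show k * 1 = k
    omega
  rw [h2]

lemma satPow_TA_mem {A : Matrix (Fin m) (Fin n) ℕ} {t : ℕ} {f : MvPolynomial (Fin n) K}
    (h : f ∈ satPow (toricIdeal K A ^ t) (mProd K n)) (σ : Fin m →₀ ℕ) :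
    TA A σ f ∈ satPow (toricIdeal K A ^ t) (mProd K n) := by
  obtain ⟨k, hk⟩ := h
  refine ⟨k, ?_⟩
  rw [mProd_pow_eq] at hk ⊢
  rw [monomial_mul_TA]
  exact pow_TA_mem hk _

lemma monomial_satPow {A : Matrix (Fin m) (Fin n) ℕ} {t : ℕ} {b : Fin n →₀ ℕ} {c : K}
    (hc : c ≠ 0) {h : MvPolynomial (Fin n) K}
    (hmem : monomial b c * h ∈ satPow (toricIdeal K A ^ t) (mProd K n)) :
    h ∈ satPow (toricIdeal K A ^ t) (mProd K n) := by
  set Q := satPow (toricIdeal K A ^ t) (mProd K n) with hQ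
  have h1 : monomial b 1 * h ∈ Q := by
    have h0 := Q.mul_mem_left (C c⁻¹) hmem
    rwa [← mul_assoc, C_mul_monomial, inv_mul_cancel₀ hc] at h0
  set B := Finset.univ.sup (fun i => b i) with hB
  set cb : Fin n →₀ ℕ := Finsupp.equivFunOnFinite.symm (fun i => B - b i) with hcb
  have h2 : monomial cb (1 : K) * (monomial b 1 * h) ∈ Q := Q.mul_mem_left _ h1
  rw [← mul_assoc, monomial_mul, one_mul] at h2
  have h3 : cb + b = constF n B := by
    ext i
    have : b i ≤ B := Finset.le_sup (Finset.mem_univ i)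
    simp only [Finsupp.add_apply]
    show (B - b i) + b i = B
    omega
  rw [h3, ← mProd_pow_eq] at h2
  obtain ⟨k, hk⟩ := h2
  exact ⟨k + B, by rwa [pow_add, mul_assoc]⟩

/-- The key homogeneous lemma. -/
lemma homog_key {A : Matrix (Fin m) (Fin n) ℕ} {t : ℕ} {τ : Fin m →₀ ℕ}
    {y x : MvPolynomial (Fin n) K}
    (hy : IsHomA A τ y) (hyI : y ∉ toricIdeal K A)
    (hxy : x * y ∈ satPow (toricIdeal K A ^ t) (mProd K n)) :
    x ∈ satPow (toricIdeal K A ^ t) (mProd K n) := by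
  classical
  set Q := satPow (toricIdeal K A ^ t) (mProd K n) with hQ
  have hs : csum A τ y ≠ 0 := by
    intro h0
    apply hyI
    rw [mem_toricIdeal_iff]
    intro τ'
    by_cases hτ : τ' = τ
    · rw [hτ]; exact h0
    · refine Finset.sum_eq_zero fun γ hγ => if_neg ?_
      rw [hy γ hγ]
      exact fun hc => hτ hc.symm
  have hy0 : y ≠ 0 := fun h0 => hyI (h0 ▸ (toricIdeal K A).zero_mem)
  obtain ⟨b, hb⟩ := (MvPolynomial.support_nonempty.mpr hy0).exists_mem
  set s := csum A τ y with hsdef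
  set ι := y - monomial b s with hι
  have hιI : ι ∈ toricIdeal K A := by
    rw [mem_toricIdeal_iff_phi, hι, map_sub, phiA_of_isHom hy, phiA_monomial, hy b hb, sub_self]
  have hymb : y = monomial b s + ι := by rw [hι]; ring
  have key : ∀ d, d ≤ t → x * ι ^ (t - d) ∈ Q := by
    intro d
    induction d with
    | zero =>
      intro _
      have : x * ι ^ t ∈ toricIdeal K A ^ t :=
        Ideal.mul_mem_left _ _ (Ideal.pow_mem_pow hιI t)
      exact ⟨0, by simpa using this⟩
    | succ d ih =>
      intro hdt
      have h1 : x * ι ^ (t - d) ∈ Q := ih (Nat.le_of_succ_le hdt)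
      have hk : t - d = (t - (d + 1)) + 1 := by omega
      set k := t - (d + 1) with hkdef
      rw [hk] at h1
      have hid : monomial b s * (x * ι ^ k) = (x * y) * ι ^ k - x * ι ^ (k + 1) := by
        rw [hymb]; ring
      have h2 : (x * y) * ι ^ k ∈ Q := Q.mul_mem_right _ hxy
      have h3 : monomial b s * (x * ι ^ k) ∈ Q := by
        rw [hid]; exact Q.sub_mem h2 h1
      exact monomial_satPow hs h3
  have hfin := key t le_rfl
  simpa using hfin

lemma support_sub_TA {A : Matrix (Fin m) (Fin n) ℕ} {σt : Fin m →₀ ℕ}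
    {f : MvPolynomial (Fin n) K} {α : Fin n →₀ ℕ} (hα : α ∈ (f - TA A σt f).support) :
    α ∈ f.support ∧ DA A α ≠ σt := by
  have h := MvPolynomial.mem_support_iff.mp hα
  rw [coeff_sub, coeff_TA] at h
  by_cases h1 : DA A α = σt
  · rw [if_pos h1, sub_self] at h
    exact absurd rfl h
  · rw [if_neg h1, sub_zero] at h
    exact ⟨MvPolynomial.mem_support_iff.mpr h, h1⟩

lemma TA_top_mul {A : Matrix (Fin m) (Fin n) ℕ} {f g : MvPolynomial (Fin n) K}
    {σt τt : Fin m →₀ ℕ}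
    (hfmax : ∀ ρ ∈ Degs A f, toLex ρ ≤ toLex σt)
    (hgmax : ∀ ρ ∈ Degs A g, toLex ρ ≤ toLex τt) :
    TA A (σt + τt) (f * g) = TA A σt f * TA A τt g := by
  classical
  have hf' : ∀ α ∈ (f - TA A σt f).support, toLex (DA A α) < toLex σt := by
    intro α hα
    obtain ⟨h1, h2⟩ := support_sub_TA hα
    exact lt_of_le_of_ne (hfmax _ (Finset.mem_image_of_mem _ h1))
      (fun hc => h2 (toLex.injective hc))
  have hg' : ∀ α ∈ (g - TA A τt g).support, toLex (DA A α) < toLex τt := by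
    intro α hα
    obtain ⟨h1, h2⟩ := support_sub_TA hα
    exact lt_of_le_of_ne (hgmax _ (Finset.mem_image_of_mem _ h1))
      (fun hc => h2 (toLex.injective hc))
  have hsplit : f * g = TA A σt f * TA A τt g
      + (TA A σt f * (g - TA A τt g) + (f - TA A σt f) * g) := by ring
  rw [hsplit, TA_add, TA_add]
  have e1 : TA A (σt + τt) (TA A σt f * TA A τt g) = TA A σt f * TA A τt g :=
    TA_of_isHom (isHom_mul (isHom_TA A σt f) (isHom_TA A τt g))
  have e2 : TA A (σt + τt) (TA A σt f * (g - TA A τt g)) = 0 := by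
    refine TA_eq_zero fun α hα => ?_
    obtain ⟨a, ha, b, hb, rfl⟩ := Finset.mem_add.mp (MvPolynomial.support_mul _ _ hα)
    rw [DA_add, (mem_support_TA ha).2]
    intro hcon
    have hlt : (toLex σt + toLex (DA A b) : Lex (Fin m →₀ ℕ)) < toLex σt + toLex τt :=
      add_lt_add_right (hg' b hb) _
    exact absurd (congrArg toLex hcon) (ne_of_lt hlt)
  have e3 : TA A (σt + τt) ((f - TA A σt f) * g) = 0 := by
    refine TA_eq_zero fun α hα => ?_
    obtain ⟨a, ha, b, hb, rfl⟩ := Finset.mem_add.mp (MvPolynomial.support_mul _ _ hα)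
    rw [DA_add]
    intro hcon
    have hle : (toLex (DA A a) + toLex (DA A b) : Lex (Fin m →₀ ℕ))
        ≤ toLex (DA A a) + toLex τt :=
      add_le_add_right (hgmax _ (Finset.mem_image_of_mem _ hb)) _
    have hlt : (toLex (DA A a) + toLex τt : Lex (Fin m →₀ ℕ)) < toLex σt + toLex τt :=
      add_lt_add_left (hf' a ha) _
    exact absurd (congrArg toLex hcon) (ne_of_lt (lt_of_le_of_lt hle hlt))
  rw [e1, e2, e3, add_zero, add_zero]

lemma main_contra {A : Matrix (Fin m) (Fin n) ℕ} {t : ℕ} :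
    ∀ (k : ℕ) (g f : MvPolynomial (Fin n) K), (Degs A g).card ≤ k →
      f * g ∈ satPow (toricIdeal K A ^ t) (mProd K n) →
      f ∉ satPow (toricIdeal K A ^ t) (mProd K n) → g ∈ toricIdeal K A := by
  classical
  intro k
  induction k with
  | zero =>
    intro g f hcard _ _
    have hg : g = 0 := by
      have h0 : Degs A g = ∅ := Finset.card_eq_zero.mp (Nat.le_zero.mp hcard)
      have h1 : g.support = ∅ := Finset.image_eq_empty.mp h0
      exact MvPolynomial.support_eq_empty.mp h1
    exact hg ▸ (toricIdeal K A).zero_mem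
  | succ k ihk =>
    suffices h : ∀ (l : ℕ) (g f : MvPolynomial (Fin n) K), (Degs A g).card ≤ k + 1 →
        (Degs A f).card ≤ l →
        f * g ∈ satPow (toricIdeal K A ^ t) (mProd K n) →
        f ∉ satPow (toricIdeal K A ^ t) (mProd K n) → g ∈ toricIdeal K A by
      intro g f hg hfg hf
      exact h (Degs A f).card g f hg le_rfl hfg hf
    intro l
    induction l with
    | zero =>
      intro g f _ hcard hfg hf
      exfalso
      apply hf
      have hf0 : f = 0 := by
        have h0 : Degs A f = ∅ := Finset.card_eq_zero.mp (Nat.le_zero.mp hcard)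
        exact MvPolynomial.support_eq_empty.mp (Finset.image_eq_empty.mp h0)
      exact hf0 ▸ (satPow (toricIdeal K A ^ t) (mProd K n)).zero_mem
    | succ l ihl =>
      intro g f hgcard hfcard hfg hf
      set Q := satPow (toricIdeal K A ^ t) (mProd K n) with hQdef
      by_cases hg0 : g = 0
      · exact hg0 ▸ (toricIdeal K A).zero_mem
      have hf0 : f ≠ 0 := fun h0 => hf (h0 ▸ Q.zero_mem)
      obtain ⟨σt, hσmem, hσmax⟩ := Finset.exists_max_image (Degs A f) toLex
        ((MvPolynomial.support_nonempty.mpr hf0).image _)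
      obtain ⟨τt, hτmem, hτmax⟩ := Finset.exists_max_image (Degs A g) toLex
        ((MvPolynomial.support_nonempty.mpr hg0).image _)
      have htop : TA A (σt + τt) (f * g) = TA A σt f * TA A τt g :=
        TA_top_mul hσmax hτmax
      by_cases hfT : TA A σt f ∈ Q
      · -- case A : strip the top of f
        refine ihl g (f - TA A σt f) hgcard ?_ ?_ ?_
        · -- card bound
          have hsub : Degs A (f - TA A σt f) ⊆ (Degs A f).erase σt := by
            intro ρ hρ
            obtain ⟨α, hα, rfl⟩ := Finset.mem_image.mp hρ
            obtain ⟨h1, h2⟩ := support_sub_TA hα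
            exact Finset.mem_erase.mpr ⟨h2, Finset.mem_image_of_mem _ h1⟩
          calc (Degs A (f - TA A σt f)).card ≤ ((Degs A f).erase σt).card :=
                Finset.card_le_card hsub
            _ = (Degs A f).card - 1 := Finset.card_erase_of_mem hσmem
            _ ≤ l := by omega
        · have : (f - TA A σt f) * g = f * g - TA A σt f * g := by ring
          rw [this]
          exact Q.sub_mem hfg (Q.mul_mem_right _ hfT)
        · intro hc
          apply hf
          have : f = (f - TA A σt f) + TA A σt f := by ring
          rw [this]
          exact Q.add_mem hc hfT
      · -- case B : the top of g is in the toric ideal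
        have hgtI : TA A τt g ∈ toricIdeal K A := by
          by_contra hgt
          exact hfT (homog_key (isHom_TA A τt g) hgt
            (htop ▸ satPow_TA_mem hfg (σt + τt)))
        set g' := g - TA A τt g with hg'def
        have hg'card : (Degs A g').card ≤ k := by
          have hsub : Degs A g' ⊆ (Degs A g).erase τt := by
            intro ρ hρ
            obtain ⟨α, hα, rfl⟩ := Finset.mem_image.mp hρ
            obtain ⟨h1, h2⟩ := support_sub_TA hα
            exact Finset.mem_erase.mpr ⟨h2, Finset.mem_image_of_mem _ h1⟩
          calc (Degs A g').card ≤ ((Degs A g).erase τt).card := Finset.card_le_card hsub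
            _ = (Degs A g).card - 1 := Finset.card_erase_of_mem hτmem
            _ ≤ k := by omega
        have hfg't : f * g' ^ t ∈ Q := by
          have hexp : g' ^ t = ∑ i ∈ Finset.range (t + 1),
              g ^ i * (-(TA A τt g)) ^ (t - i) * ((t.choose i : ℕ) : MvPolynomial (Fin n) K) := by
            have : g' = g + (-(TA A τt g)) := by rw [hg'def]; ring
            rw [this, add_pow]
          rw [hexp, Finset.mul_sum]
          refine Q.sum_mem fun i _ => ?_
          rcases i with _ | i'
          · have hgt_pow : (TA A τt g) ^ t ∈ Q :=
              ⟨0, by simpa using Ideal.pow_mem_pow hgtI t⟩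
            simp only [Nat.sub_zero, pow_zero, one_mul]
            have : f * ((-(TA A τt g)) ^ t * ((t.choose 0 : ℕ) : MvPolynomial (Fin n) K))
                = ((-1) ^ t * f * ((t.choose 0 : ℕ) : MvPolynomial (Fin n) K)) * (TA A τt g) ^ t := by
              rw [neg_pow]
              ring
            rw [this]
            exact Q.mul_mem_left _ hgt_pow
          · have : f * (g ^ (i' + 1) * (-(TA A τt g)) ^ (t - (i' + 1)) * ((t.choose (i' + 1) : ℕ) : MvPolynomial (Fin n) K))
                = (f * g) * (g ^ i' * (-(TA A τt g)) ^ (t - (i' + 1)) * ((t.choose (i' + 1) : ℕ) : MvPolynomial (Fin n) K)) := by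
              ring
            rw [this]
            exact Q.mul_mem_right _ hfg
        have hex : ∃ j, f * g' ^ j ∈ Q := ⟨t, hfg't⟩
        have hj : f * g' ^ (Nat.find hex) ∈ Q := Nat.find_spec hex
        have hj0 : Nat.find hex ≠ 0 := by
          intro h0
          rw [h0, pow_zero, mul_one] at hj
          exact hf hj
        have hjm : f * g' ^ (Nat.find hex - 1) ∉ Q := Nat.find_min hex (by omega)
        have hstep : (f * g' ^ (Nat.find hex - 1)) * g' ∈ Q := by
          rw [mul_assoc, ← pow_succ]
          rw [show Nat.find hex - 1 + 1 = Nat.find hex by omega]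
          exact hj
        have hg'I : g' ∈ toricIdeal K A := ihk g' _ hg'card hstep hjm
        have hgsum : g = g' + TA A τt g := by rw [hg'def]; ring
        rw [hgsum]
        exact (toricIdeal K A).add_mem hg'I hgtI

end ToricAux
/-- For every `t ≥ 1`, `I_A^t : m^∞ = I_A^{(t)}`. -/
theorem satPow_pow_eq_symbolicPower
    {K : Type*} [Field K] [IsAlgClosed K] [CharZero K]
    {m n : ℕ} (A : Matrix (Fin m) (Fin n) ℕ)
    (hA : ∀ i, ∃ j, A j i ≠ 0)
    (t : ℕ) (ht : 1 ≤ t) :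
    (satPow ((toricIdeal K A) ^ t) (mProd K n) : Set (MvPolynomial (Fin n) K))
      = symbolicPower (toricIdeal K A) t := by
  classical
  ext f
  simp only [SetLike.mem_coe]
  constructor
  · rintro ⟨k, hk⟩
    refine ⟨mProd K n ^ k, ?_, by rwa [mul_comm f]⟩
    rw [ToricAux.mem_toricIdeal_iff_phi, map_pow]
    have h1 : phiA K A (mProd K n)
        = monomial (ToricAux.DA A (ToricAux.constF n 1)) 1 := by
      rw [show mProd K n = monomial (ToricAux.constF n 1) (1 : K) from
        (pow_one (mProd K n)).symm.trans (ToricAux.mProd_pow_eq 1), ToricAux.phiA_monomial]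
    rw [h1]
    exact pow_ne_zero _ (fun hc => one_ne_zero (MvPolynomial.monomial_eq_zero.mp hc))
  · rintro ⟨g, hgI, hfg⟩
    by_contra hf
    exact hgI (ToricAux.main_contra (ToricAux.Degs A g).card g f le_rfl
      ⟨0, by simpa using hfg⟩ hf)
end
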